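/- Consider the single-period Kyle game with E_V = {0, 1/2, 1} uniform, E_X = E_Z = {−1, 0, 1}, and noise distribution ζ = (6/8)δ_{−1} + (1/8)δ_0 + (1/8)δ_1. Then there is a unique Kyle equilibrium, given by the pure insider strategy ξ(v,·) = δ_{2v−1} and prices S(−2)=0, S(−1)=3/7, S(0)=13/16, S(1)=3/4, S(2)=1. In particular, the equilibrium price function is not monotone: S(0) > S(1). -/

import Mathlib

open Finset

/-- Average execution price `∫ S(x+z) ζ(dz)` for an insider order of size `x`. -/
noncomputable def avgPrice (EZ : Finset ℝ) (ζ : ℝ → ℝ) (S : ℝ → ℝ) (x : ℝ) : ℝ :=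
  ∑ z ∈ EZ, ζ z * S (x + z)

/-- The insider's expected gain from order `x` when the true value is `v`. -/
noncomputable def gain (EZ : Finset ℝ) (ζ : ℝ → ℝ) (S : ℝ → ℝ) (v x : ℝ) : ℝ :=
  x * (v - avgPrice EZ ζ S x)

/-- Probability that the total demand equals `y`. -/
noncomputable def pY (EV EX EZ : Finset ℝ) (ν ζ : ℝ → ℝ) (ξ : ℝ → ℝ → ℝ) (y : ℝ) : ℝ :=
  ∑ v ∈ EV, ∑ x ∈ EX, ∑ z ∈ EZ, if x + z = y then ν v * ξ v x * ζ z else 0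

/-- Joint expectation of the true value on the event that total demand is `y`. -/
noncomputable def pYV (EV EX EZ : Finset ℝ) (ν ζ : ℝ → ℝ) (ξ : ℝ → ℝ → ℝ) (y : ℝ) : ℝ :=
  ∑ v ∈ EV, ∑ x ∈ EX, ∑ z ∈ EZ, if x + z = y then ν v * ξ v x * ζ z * v else 0

/-- `ξ` is a behaviour strategy: `ξ(v,·)` is a probability vector on `E_X`. -/
def IsStrategy (EV EX : Finset ℝ) (ξ : ℝ → ℝ → ℝ) : Prop :=
  ∀ v ∈ EV, (∀ x ∈ EX, 0 ≤ ξ v x) ∧ ∑ x ∈ EX, ξ v x = 1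

/-- Kyle equilibrium of the single-period discrete game: `ξ(v,·)` is supported on
maximisers of the gain given `S`, and `S` satisfies rational pricing given `ξ`
at every total demand with positive probability. -/
def IsKyleEquilibrium (EV EX EZ : Finset ℝ) (ν ζ : ℝ → ℝ)
    (ξ : ℝ → ℝ → ℝ) (S : ℝ → ℝ) : Prop :=
  IsStrategy EV EX ξ ∧
  (∀ v ∈ EV, ∀ x ∈ EX, 0 < ξ v x → ∀ x' ∈ EX, gain EZ ζ S v x' ≤ gain EZ ζ S v x) ∧
  (∀ y : ℝ, 0 < pY EV EX EZ ν ζ ξ y →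
    S y * pY EV EX EZ ν ζ ξ y = pYV EV EX EZ ν ζ ξ y)

/-- The equilibrium insider strategy of Example: buy if `v = 1`, do nothing if
`v = 1/2`, sell if `v = 0`, i.e. `ξ(v,·) = δ_{2v−1}`. -/
noncomputable def xiStar (v x : ℝ) : ℝ := if x = 2 * v - 1 then 1 else 0

/-- The equilibrium price function of the example. -/
noncomputable def SStar (y : ℝ) : ℝ :=
  if y = -2 then 0 else if y = -1 then 3 / 7 else if y = 0 then 13 / 16
  else if y = 1 then 3 / 4 else 1

/-!
Prices lie in `[0, 1]` and every noise value has positive probability. For `x ∈ {-1, 0, 1}` the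
noise `z = x` moves any order of the type `v = 1` into the window `{x - 1, x, x + 1}` averaged by
`avgPrice _ _ S x`, and rational pricing puts the price there above `0`; likewise the type `v = 0`
forces a price below `1`. So every average execution price lies strictly between `0` and `1`,
which makes selling strictly optimal for `v = 0` and buying strictly optimal for `v = 1`.
Against these pure strategies rational pricing gives `S(-2) ≤ 1/4`, `S(0) > 1/2` and
`S(1), S(2) ≥ 1/2`, so holding is strictly optimal for `v = 1/2`. The strategy is therefore
`xiStar`, and the prices are read off its rational pricing equations.
-/

section General

variable {EV EX EZ : Finset ℝ} {ν ζ : ℝ → ℝ} {ξ : ℝ → ℝ → ℝ} {S : ℝ → ℝ}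

theorem IsStrategy.exists_pos (hξ : IsStrategy EV EX ξ) {v : ℝ} (hv : v ∈ EV) :
    ∃ x ∈ EX, 0 < ξ v x :=
  exists_lt_of_sum_lt (by simp [(hξ v hv).2])

theorem IsKyleEquilibrium.xi_eq_zero_of_gain_lt (h : IsKyleEquilibrium EV EX EZ ν ζ ξ S)
    {v x x' : ℝ} (hv : v ∈ EV) (hx : x ∈ EX) (hx' : x' ∈ EX)
    (hlt : gain EZ ζ S v x < gain EZ ζ S v x') : ξ v x = 0 :=
  (((h.1 v hv).1 x hx).eq_of_not_lt fun hpos => (h.2.1 v hv x hx hpos x' hx').not_gt hlt).symm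

theorem pY_eq_zero_of_forall_add_ne {y : ℝ} (hy : ∀ x ∈ EX, ∀ z ∈ EZ, x + z ≠ y) :
    pY EV EX EZ ν ζ ξ y = 0 :=
  sum_eq_zero fun _ _ => sum_eq_zero fun x hx => sum_eq_zero fun z hz => if_neg (hy x hx z hz)

theorem pY_congr {ξ' : ℝ → ℝ → ℝ} (hξ : ∀ v ∈ EV, ∀ x ∈ EX, ξ v x = ξ' v x) (y : ℝ) :
    pY EV EX EZ ν ζ ξ y = pY EV EX EZ ν ζ ξ' y :=
  sum_congr rfl fun v hv => sum_congr rfl fun x hx => by rw [hξ v hv x hx]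

theorem pYV_congr {ξ' : ℝ → ℝ → ℝ} (hξ : ∀ v ∈ EV, ∀ x ∈ EX, ξ v x = ξ' v x) (y : ℝ) :
    pYV EV EX EZ ν ζ ξ y = pYV EV EX EZ ν ζ ξ' y :=
  sum_congr rfl fun v hv => sum_congr rfl fun x hx => by rw [hξ v hv x hx]

theorem sum_ite_mul_affine (a b y : ℝ) :
    ∑ v ∈ EV, ∑ x ∈ EX, ∑ z ∈ EZ,
        (if x + z = y then ν v * ξ v x * ζ z * (a * v + b) else 0) =
      a * pYV EV EX EZ ν ζ ξ y + b * pY EV EX EZ ν ζ ξ y := by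
  simp only [pYV, pY, mul_sum, ← sum_add_distrib]
  refine sum_congr rfl fun v _ => sum_congr rfl fun x _ => sum_congr rfl fun z _ => ?_
  split_ifs <;> ring

theorem IsStrategy.mul_pYV_add_mul_pY_pos (hξ : IsStrategy EV EX ξ) (hν : ∀ v ∈ EV, 0 ≤ ν v)
    (hζ : ∀ z ∈ EZ, 0 ≤ ζ z) {a b : ℝ} (hab : ∀ v ∈ EV, 0 ≤ a * v + b) {v₁ x₁ z₁ : ℝ}
    (hv₁ : v₁ ∈ EV) (hx₁ : x₁ ∈ EX) (hz₁ : z₁ ∈ EZ) (hreach : 0 < ν v₁ * ξ v₁ x₁ * ζ z₁)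
    (hv₁pos : 0 < a * v₁ + b) :
    0 < a * pYV EV EX EZ ν ζ ξ (x₁ + z₁) + b * pY EV EX EZ ν ζ ξ (x₁ + z₁) := by
  have hterm : ∀ v ∈ EV, ∀ x ∈ EX, ∀ z ∈ EZ,
      0 ≤ if x + z = x₁ + z₁ then ν v * ξ v x * ζ z * (a * v + b) else 0 := by
    intro v hv x hx z hz
    split_ifs
    · exact mul_nonneg (mul_nonneg (mul_nonneg (hν v hv) ((hξ v hv).1 x hx)) (hζ z hz)) (hab v hv)
    · exact le_rfl
  rw [← sum_ite_mul_affine]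
  refine sum_pos' (fun v hv => sum_nonneg fun x hx => sum_nonneg fun z hz => hterm v hv x hx z hz)
    ⟨v₁, hv₁, sum_pos' (fun x hx => sum_nonneg fun z hz => hterm v₁ hv₁ x hx z hz)
      ⟨x₁, hx₁, sum_pos' (fun z hz => hterm v₁ hv₁ x₁ hx₁ z hz) ⟨z₁, hz₁, ?_⟩⟩⟩
  rw [if_pos rfl]
  exact mul_pos hreach hv₁pos

theorem IsStrategy.pY_pos (hξ : IsStrategy EV EX ξ) (hν : ∀ v ∈ EV, 0 ≤ ν v)
    (hζ : ∀ z ∈ EZ, 0 ≤ ζ z) {v₁ x₁ z₁ : ℝ} (hv₁ : v₁ ∈ EV) (hx₁ : x₁ ∈ EX) (hz₁ : z₁ ∈ EZ)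
    (hreach : 0 < ν v₁ * ξ v₁ x₁ * ζ z₁) : 0 < pY EV EX EZ ν ζ ξ (x₁ + z₁) := by
  simpa using hξ.mul_pYV_add_mul_pY_pos hν hζ (a := 0) (b := 1) (by simp) hv₁ hx₁ hz₁ hreach
    (by norm_num)

theorem IsKyleEquilibrium.price_eq_div (h : IsKyleEquilibrium EV EX EZ ν ζ ξ S) {y : ℝ}
    (hy : 0 < pY EV EX EZ ν ζ ξ y) : S y = pYV EV EX EZ ν ζ ξ y / pY EV EX EZ ν ζ ξ y :=
  eq_div_of_mul_eq hy.ne' (h.2.2 y hy)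

theorem IsKyleEquilibrium.lt_price (h : IsKyleEquilibrium EV EX EZ ν ζ ξ S)
    (hν : ∀ v ∈ EV, 0 ≤ ν v) (hζ : ∀ z ∈ EZ, 0 ≤ ζ z) {c : ℝ} (hc : ∀ v ∈ EV, c ≤ v)
    {v₁ x₁ z₁ : ℝ} (hv₁ : v₁ ∈ EV) (hx₁ : x₁ ∈ EX) (hz₁ : z₁ ∈ EZ)
    (hreach : 0 < ν v₁ * ξ v₁ x₁ * ζ z₁) (hcv₁ : c < v₁) : c < S (x₁ + z₁) := by
  have hp := h.1.pY_pos hν hζ hv₁ hx₁ hz₁ hreach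
  have hmean := h.1.mul_pYV_add_mul_pY_pos hν hζ (a := 1) (b := -c)
    (fun v hv => by linarith [hc v hv]) hv₁ hx₁ hz₁ hreach (by linarith)
  rw [← h.2.2 _ hp] at hmean
  exact lt_of_mul_lt_mul_right (by linarith) hp.le

theorem IsKyleEquilibrium.price_lt (h : IsKyleEquilibrium EV EX EZ ν ζ ξ S)
    (hν : ∀ v ∈ EV, 0 ≤ ν v) (hζ : ∀ z ∈ EZ, 0 ≤ ζ z) {c : ℝ} (hc : ∀ v ∈ EV, v ≤ c)
    {v₁ x₁ z₁ : ℝ} (hv₁ : v₁ ∈ EV) (hx₁ : x₁ ∈ EX) (hz₁ : z₁ ∈ EZ)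
    (hreach : 0 < ν v₁ * ξ v₁ x₁ * ζ z₁) (hv₁c : v₁ < c) : S (x₁ + z₁) < c := by
  have hp := h.1.pY_pos hν hζ hv₁ hx₁ hz₁ hreach
  have hmean := h.1.mul_pYV_add_mul_pY_pos hν hζ (a := -1) (b := c)
    (fun v hv => by linarith [hc v hv]) hv₁ hx₁ hz₁ hreach (by linarith)
  rw [← h.2.2 _ hp] at hmean
  exact lt_of_mul_lt_mul_right (by linarith) hp.le

theorem avgPrice_pos_of_price_pos (hζ : ∀ z ∈ EZ, 0 ≤ ζ z) (hS : ∀ y, 0 ≤ S y) {x z : ℝ}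
    (hz : z ∈ EZ) (hζz : 0 < ζ z) (hSz : 0 < S (x + z)) : 0 < avgPrice EZ ζ S x :=
  sum_pos' (fun z' hz' => mul_nonneg (hζ z' hz') (hS _)) ⟨z, hz, mul_pos hζz hSz⟩

theorem avgPrice_lt_one_of_price_lt_one (hζ : ∀ z ∈ EZ, 0 ≤ ζ z) (hζ₁ : ∑ z ∈ EZ, ζ z = 1)
    (hS : ∀ y, S y ≤ 1) {x z : ℝ} (hz : z ∈ EZ) (hζz : 0 < ζ z) (hSz : S (x + z) < 1) :
    avgPrice EZ ζ S x < 1 := by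
  rw [← hζ₁]
  exact sum_lt_sum (fun z' hz' => mul_le_of_le_one_right (hζ z' hz') (hS _))
    ⟨z, hz, mul_lt_of_lt_one_right hζz hSz⟩

end General

namespace KyleExample

local notation "𝒱" => ({0, 1 / 2, 1} : Finset ℝ)
local notation "𝒳" => ({-1, 0, 1} : Finset ℝ)
local notation "𝒴" => ({-2, -1, 0, 1, 2} : Finset ℝ)
local notation "ν₀" => fun (_ : ℝ) => (1 / 3 : ℝ)
-- `ite` because `notation` cannot quote `if … then … else`.
local notation "ζ₀" => fun (z : ℝ) => ite (z = -1) (6 / 8 : ℝ) (1 / 8)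

theorem sum_orders (f : ℝ → ℝ) : ∑ x ∈ 𝒳, f x = f (-1) + f 0 + f 1 := by
  rw [sum_insert (by norm_num), sum_insert (by norm_num), sum_singleton, add_assoc]

theorem sum_values (f : ℝ → ℝ) : ∑ v ∈ 𝒱, f v = f 0 + f (1 / 2) + f 1 := by
  rw [sum_insert (by norm_num), sum_insert (by norm_num), sum_singleton, add_assoc]

theorem add_mem_demands {x z : ℝ} (hx : x ∈ 𝒳) (hz : z ∈ 𝒳) : x + z ∈ 𝒴 := by
  simp only [mem_insert, mem_singleton] at hx hz ⊢
  rcases hx with rfl | rfl | rfl <;> rcases hz with rfl | rfl | rfl <;> norm_num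

theorem avgPrice_noise (S : ℝ → ℝ) (x : ℝ) :
    avgPrice 𝒳 ζ₀ S x = (6 * S (x - 1) + S x + S (x + 1)) / 8 := by
  rw [avgPrice, sum_orders]
  norm_num [sub_eq_add_neg]
  ring

theorem prior_nonneg : ∀ v ∈ 𝒱, 0 ≤ (ν₀) v := fun _ _ => by norm_num

theorem noise_pos (z : ℝ) : 0 < (ζ₀) z := by
  dsimp only
  split_ifs <;> norm_num

theorem noise_nonneg : ∀ z ∈ 𝒳, 0 ≤ (ζ₀) z := fun z _ => (noise_pos z).le

theorem noise_sum : ∑ z ∈ 𝒳, (ζ₀) z = 1 := by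
  rw [sum_orders]
  norm_num

section Formulas

variable (ξ : ℝ → ℝ → ℝ)

theorem pY_neg_two : pY 𝒱 𝒳 𝒳 ν₀ ζ₀ ξ (-2) =
    (6 * ξ 0 (-1) + 6 * ξ (1 / 2) (-1) + 6 * ξ 1 (-1)) / 24 := by
  simp only [pY, sum_values, sum_orders]; norm_num; ring

theorem pY_neg_one : pY 𝒱 𝒳 𝒳 ν₀ ζ₀ ξ (-1) =
    (ξ 0 (-1) + 6 * ξ 0 0 + ξ (1 / 2) (-1) + 6 * ξ (1 / 2) 0 + ξ 1 (-1) + 6 * ξ 1 0) / 24 := by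
  simp only [pY, sum_values, sum_orders]; norm_num; ring

theorem pY_zero : pY 𝒱 𝒳 𝒳 ν₀ ζ₀ ξ 0 =
    (ξ 0 (-1) + ξ 0 0 + 6 * ξ 0 1 + ξ (1 / 2) (-1) + ξ (1 / 2) 0 + 6 * ξ (1 / 2) 1
      + ξ 1 (-1) + ξ 1 0 + 6 * ξ 1 1) / 24 := by
  simp only [pY, sum_values, sum_orders]; norm_num; ring

theorem pY_one : pY 𝒱 𝒳 𝒳 ν₀ ζ₀ ξ 1 =
    (ξ 0 0 + ξ 0 1 + ξ (1 / 2) 0 + ξ (1 / 2) 1 + ξ 1 0 + ξ 1 1) / 24 := by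
  simp only [pY, sum_values, sum_orders]; norm_num; ring

theorem pY_two : pY 𝒱 𝒳 𝒳 ν₀ ζ₀ ξ 2 = (ξ 0 1 + ξ (1 / 2) 1 + ξ 1 1) / 24 := by
  simp only [pY, sum_values, sum_orders]; norm_num; ring

theorem pYV_neg_two : pYV 𝒱 𝒳 𝒳 ν₀ ζ₀ ξ (-2) =
    (3 * ξ (1 / 2) (-1) + 6 * ξ 1 (-1)) / 24 := by
  simp only [pYV, sum_values, sum_orders]; norm_num; ring

theorem pYV_neg_one : pYV 𝒱 𝒳 𝒳 ν₀ ζ₀ ξ (-1) =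
    ((ξ (1 / 2) (-1) + 6 * ξ (1 / 2) 0) / 2 + ξ 1 (-1) + 6 * ξ 1 0) / 24 := by
  simp only [pYV, sum_values, sum_orders]; norm_num; ring

theorem pYV_zero : pYV 𝒱 𝒳 𝒳 ν₀ ζ₀ ξ 0 =
    ((ξ (1 / 2) (-1) + ξ (1 / 2) 0 + 6 * ξ (1 / 2) 1) / 2 + ξ 1 (-1) + ξ 1 0 + 6 * ξ 1 1) / 24 := by
  simp only [pYV, sum_values, sum_orders]; norm_num; ring

theorem pYV_one : pYV 𝒱 𝒳 𝒳 ν₀ ζ₀ ξ 1 =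
    ((ξ (1 / 2) 0 + ξ (1 / 2) 1) / 2 + ξ 1 0 + ξ 1 1) / 24 := by
  simp only [pYV, sum_values, sum_orders]; norm_num; ring

theorem pYV_two : pYV 𝒱 𝒳 𝒳 ν₀ ζ₀ ξ 2 = (ξ (1 / 2) 1 / 2 + ξ 1 1) / 24 := by
  simp only [pYV, sum_values, sum_orders]; norm_num; ring

end Formulas

theorem mem_demands_of_pY_pos {ξ : ℝ → ℝ → ℝ} {y : ℝ} (hy : 0 < pY 𝒱 𝒳 𝒳 ν₀ ζ₀ ξ y) :
    y ∈ 𝒴 := by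
  by_contra hy'
  refine hy.ne' (pY_eq_zero_of_forall_add_ne fun x hx z hz hxz => hy' ?_)
  exact hxz ▸ add_mem_demands hx hz

theorem value_nonneg : ∀ v ∈ 𝒱, 0 ≤ v := by norm_num

theorem value_le_one : ∀ v ∈ 𝒱, v ≤ 1 := by norm_num

theorem reach_pos {ξ : ℝ → ℝ → ℝ} {v x : ℝ} (hξ : 0 < ξ v x) (z : ℝ) :
    0 < (ν₀) v * ξ v x * (ζ₀) z :=
  mul_pos (mul_pos (by norm_num) hξ) (noise_pos z)

section Uniqueness

variable {ξ : ℝ → ℝ → ℝ} {S : ℝ → ℝ}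

theorem strategy_sum (h : IsKyleEquilibrium 𝒱 𝒳 𝒳 ν₀ ζ₀ ξ S) {v : ℝ} (hv : v ∈ 𝒱) :
    ξ v (-1) + ξ v 0 + ξ v 1 = 1 := by
  rw [← sum_orders (ξ v), (h.1 v hv).2]

theorem avgPrice_mem_Ioo (hS : ∀ y, 0 ≤ S y ∧ S y ≤ 1) (h : IsKyleEquilibrium 𝒱 𝒳 𝒳 ν₀ ζ₀ ξ S)
    {x : ℝ} (hx : x ∈ 𝒳) : avgPrice 𝒳 ζ₀ S x ∈ Set.Ioo 0 1 := by
  obtain ⟨x₁, hx₁, hξ₁⟩ := h.1.exists_pos (v := 1) (by simp)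
  obtain ⟨x₀, hx₀, hξ₀⟩ := h.1.exists_pos (v := 0) (by simp)
  have hpos := h.lt_price prior_nonneg noise_nonneg value_nonneg (by simp) hx₁ hx
    (reach_pos hξ₁ x) one_pos
  have hlt := h.price_lt prior_nonneg noise_nonneg value_le_one (by simp) hx₀ hx
    (reach_pos hξ₀ x) one_pos
  rw [add_comm] at hpos hlt
  exact ⟨avgPrice_pos_of_price_pos noise_nonneg (fun y => (hS y).1) hx₁ (noise_pos x₁) hpos,
    avgPrice_lt_one_of_price_lt_one noise_nonneg noise_sum (fun y => (hS y).2) hx₀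
      (noise_pos x₀) hlt⟩

theorem low_type_sells (hS : ∀ y, 0 ≤ S y ∧ S y ≤ 1) (h : IsKyleEquilibrium 𝒱 𝒳 𝒳 ν₀ ζ₀ ξ S) :
    ξ 0 (-1) = 1 ∧ ξ 0 0 = 0 ∧ ξ 0 1 = 0 := by
  have hneg := (avgPrice_mem_Ioo hS h (x := -1) (by simp)).1
  have hpos := (avgPrice_mem_Ioo hS h (x := 1) (by simp)).1
  have hhold : ξ 0 0 = 0 := h.xi_eq_zero_of_gain_lt (x' := -1) (by simp) (by simp) (by simp)
    (by simp only [gain]; linarith)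
  have hbuy : ξ 0 1 = 0 := h.xi_eq_zero_of_gain_lt (x' := -1) (by simp) (by simp) (by simp)
    (by simp only [gain]; linarith)
  have hsum := strategy_sum h (v := 0) (by simp)
  exact ⟨by linarith, hhold, hbuy⟩

theorem high_type_buys (hS : ∀ y, 0 ≤ S y ∧ S y ≤ 1) (h : IsKyleEquilibrium 𝒱 𝒳 𝒳 ν₀ ζ₀ ξ S) :
    ξ 1 (-1) = 0 ∧ ξ 1 0 = 0 ∧ ξ 1 1 = 1 := by
  have hneg := (avgPrice_mem_Ioo hS h (x := -1) (by simp)).2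
  have hpos := (avgPrice_mem_Ioo hS h (x := 1) (by simp)).2
  have hsell : ξ 1 (-1) = 0 := h.xi_eq_zero_of_gain_lt (x' := 0) (by simp) (by simp) (by simp)
    (by simp only [gain]; linarith)
  have hhold : ξ 1 0 = 0 := h.xi_eq_zero_of_gain_lt (x' := 1) (by simp) (by simp) (by simp)
    (by simp only [gain]; linarith)
  have hsum := strategy_sum h (v := 1) (by simp)
  exact ⟨hsell, hhold, by linarith⟩

theorem half_type_not_sell (hS : ∀ y, 0 ≤ S y ∧ S y ≤ 1) (h : IsKyleEquilibrium 𝒱 𝒳 𝒳 ν₀ ζ₀ ξ S) :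
    ξ (1 / 2) (-1) = 0 := by
  obtain ⟨h0m, -, -⟩ := low_type_sells hS h
  obtain ⟨h1m, -, -⟩ := high_type_buys hS h
  have hsum := strategy_sum h (v := 1 / 2) (by simp)
  have hpm := (h.1 (1 / 2) (by simp)).1 (-1) (by simp)
  have hp₀ := (h.1 (1 / 2) (by simp)).1 0 (by simp)
  have hp₁ := (h.1 (1 / 2) (by simp)).1 1 (by simp)
  have hpY : 0 < pY 𝒱 𝒳 𝒳 ν₀ ζ₀ ξ (-2) := by
    rw [pY_neg_two, h0m, h1m]
    linarith
  have hS₂ : S (-2) ≤ 1 / 4 := by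
    rw [h.price_eq_div hpY, pY_neg_two, pYV_neg_two, h0m, h1m, div_le_iff₀ (by linarith)]
    linarith
  refine h.xi_eq_zero_of_gain_lt (x' := 0) (by simp) (by simp) (by simp) ?_
  simp only [gain, avgPrice_noise]
  norm_num
  linarith [(hS (-1)).2, (hS 0).2]

theorem half_type_not_buy (hS : ∀ y, 0 ≤ S y ∧ S y ≤ 1) (h : IsKyleEquilibrium 𝒱 𝒳 𝒳 ν₀ ζ₀ ξ S) :
    ξ (1 / 2) 1 = 0 := by
  obtain ⟨h0m, h00, h01⟩ := low_type_sells hS h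
  obtain ⟨h1m, h10, h11⟩ := high_type_buys hS h
  have hsum := strategy_sum h (v := 1 / 2) (by simp)
  have hpm := (h.1 (1 / 2) (by simp)).1 (-1) (by simp)
  have hp₀ := (h.1 (1 / 2) (by simp)).1 0 (by simp)
  have hp₁ := (h.1 (1 / 2) (by simp)).1 1 (by simp)
  have hpY₀ : 0 < pY 𝒱 𝒳 𝒳 ν₀ ζ₀ ξ 0 := by rw [pY_zero, h0m, h00, h01, h1m, h10, h11]; linarith
  have hpY₁ : 0 < pY 𝒱 𝒳 𝒳 ν₀ ζ₀ ξ 1 := by rw [pY_one, h00, h01, h10, h11]; linarith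
  have hpY₂ : 0 < pY 𝒱 𝒳 𝒳 ν₀ ζ₀ ξ 2 := by rw [pY_two, h01, h11]; linarith
  have hS₀ : 1 / 2 < S 0 := by
    rw [h.price_eq_div hpY₀, pY_zero, pYV_zero, h0m, h00, h01, h1m, h10, h11,
      lt_div_iff₀ (by linarith)]
    linarith
  have hS₁ : 1 / 2 ≤ S 1 := by
    rw [h.price_eq_div hpY₁, pY_one, pYV_one, h00, h01, h10, h11, le_div_iff₀ (by linarith)]
    linarith
  have hS₂ : 1 / 2 ≤ S 2 := by
    rw [h.price_eq_div hpY₂, pY_two, pYV_two, h01, h11, le_div_iff₀ (by linarith)]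
    linarith
  refine h.xi_eq_zero_of_gain_lt (x' := 0) (by simp) (by simp) (by simp) ?_
  simp only [gain, avgPrice_noise]
  norm_num
  linarith

theorem xi_eq_xiStar (hS : ∀ y, 0 ≤ S y ∧ S y ≤ 1) (h : IsKyleEquilibrium 𝒱 𝒳 𝒳 ν₀ ζ₀ ξ S) :
    ∀ v ∈ 𝒱, ∀ x ∈ 𝒳, ξ v x = xiStar v x := by
  obtain ⟨h0m, h00, h01⟩ := low_type_sells hS h
  obtain ⟨h1m, h10, h11⟩ := high_type_buys hS h
  have hhm := half_type_not_sell hS h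
  have hh1 := half_type_not_buy hS h
  have hh0 : ξ (1 / 2) 0 = 1 := by linarith [strategy_sum h (v := 1 / 2) (by simp)]
  simp only [mem_insert, mem_singleton, forall_eq_or_imp, forall_eq]
  norm_num [xiStar, h0m, h00, h01, hhm, hh0, hh1, h1m, h10, h11]

end Uniqueness

theorem isKyleEquilibrium_xiStar : IsKyleEquilibrium 𝒱 𝒳 𝒳 ν₀ ζ₀ xiStar SStar := by
  refine ⟨?_, ?_, fun y hy => ?_⟩
  · simp only [IsStrategy, mem_insert, mem_singleton, forall_eq_or_imp, forall_eq, sum_orders]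
    norm_num [xiStar]
  · simp only [mem_insert, mem_singleton, forall_eq_or_imp, forall_eq, gain, avgPrice_noise]
    norm_num [xiStar, SStar]
  · have hy' := mem_demands_of_pY_pos hy
    simp only [mem_insert, mem_singleton] at hy'
    rcases hy' with rfl | rfl | rfl | rfl | rfl
    · rw [pY_neg_two, pYV_neg_two]; norm_num [xiStar, SStar]
    · rw [pY_neg_one, pYV_neg_one]; norm_num [xiStar, SStar]
    · rw [pY_zero, pYV_zero]; norm_num [xiStar, SStar]
    · rw [pY_one, pYV_one]; norm_num [xiStar, SStar]
    · rw [pY_two, pYV_two]; norm_num [xiStar, SStar]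

theorem pY_xiStar_pos {y : ℝ} (hy : y ∈ 𝒴) : 0 < pY 𝒱 𝒳 𝒳 ν₀ ζ₀ xiStar y := by
  simp only [mem_insert, mem_singleton] at hy
  rcases hy with rfl | rfl | rfl | rfl | rfl
  · rw [pY_neg_two]; norm_num [xiStar]
  · rw [pY_neg_one]; norm_num [xiStar]
  · rw [pY_zero]; norm_num [xiStar]
  · rw [pY_one]; norm_num [xiStar]
  · rw [pY_two]; norm_num [xiStar]

theorem price_eq_SStar {ξ : ℝ → ℝ → ℝ} {S : ℝ → ℝ} (hS : ∀ y, 0 ≤ S y ∧ S y ≤ 1)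
    (h : IsKyleEquilibrium 𝒱 𝒳 𝒳 ν₀ ζ₀ ξ S) {y : ℝ} (hy : y ∈ 𝒴) : S y = SStar y := by
  have hξ := xi_eq_xiStar hS h
  have hpos := pY_xiStar_pos hy
  rw [h.price_eq_div (by rwa [pY_congr hξ]), isKyleEquilibrium_xiStar.price_eq_div hpos,
    pY_congr hξ, pYV_congr hξ]

end KyleExample

theorem unique_equilibrium_nonmonotone_price :
    IsKyleEquilibrium {0, 1 / 2, 1} {-1, 0, 1} {-1, 0, 1}
      (fun _ => 1 / 3) (fun z => if z = -1 then 6 / 8 else 1 / 8) xiStar SStar ∧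
    (∀ (ξ : ℝ → ℝ → ℝ) (S : ℝ → ℝ), (∀ y, 0 ≤ S y ∧ S y ≤ 1) →
      IsKyleEquilibrium {0, 1 / 2, 1} {-1, 0, 1} {-1, 0, 1}
        (fun _ => 1 / 3) (fun z => if z = -1 then 6 / 8 else 1 / 8) ξ S →
      (∀ v ∈ ({0, 1 / 2, 1} : Finset ℝ), ∀ x ∈ ({-1, 0, 1} : Finset ℝ),
        ξ v x = xiStar v x) ∧
      (∀ y ∈ ({-2, -1, 0, 1, 2} : Finset ℝ), S y = SStar y)) ∧
    SStar 1 < SStar 0 :=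
  ⟨KyleExample.isKyleEquilibrium_xiStar, fun _ _ hS h =>
    ⟨KyleExample.xi_eq_xiStar hS h, fun _ hy => KyleExample.price_eq_SStar hS h hy⟩,
    by norm_num [SStar]⟩
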